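/- In a restriction category, the restriction limit of a single arrow f : X → Y (i.e. of the diagram consisting of one arrow) is precisely a splitting of the idempotent f̄: a map p : P → X exhibits P as the restriction limit of f if and only if there exists s : X → P with s ∘ p = 1_P and p ∘ s = f̄. -/

import Mathlib

open CategoryTheory CategoryTheory.Limits

universe v u

/-- A restriction category: a category with an operation assigning to each
morphism `f : A ⟶ B` a morphism `ρ f : A ⟶ A` satisfying axioms R.1–R.4.
(Composition is written diagrammatically: `f ≫ g` is "first `f`, then `g`",
so the paper's `g ∘ f` is `f ≫ g`.) -/
class RestrictionCategory (C : Type u) [Category.{v} C] where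
  ρ : ∀ {A B : C}, (A ⟶ B) → (A ⟶ A)
  R1 : ∀ {A B : C} (f : A ⟶ B), ρ f ≫ f = f
  R2 : ∀ {A B D : C} (f : A ⟶ B) (g : A ⟶ D), ρ f ≫ ρ g = ρ g ≫ ρ f
  R3 : ∀ {A B D : C} (f : A ⟶ B) (g : A ⟶ D), ρ (ρ f ≫ g) = ρ f ≫ ρ g
  R4 : ∀ {A B D : C} (f : A ⟶ B) (g : B ⟶ D), f ≫ ρ g = ρ (f ≫ g) ≫ f

open RestrictionCategory

/-- `p : P ⟶ X` exhibits `P` as the restriction limit of the single-arrow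
diagram `f : X ⟶ Y`: the cone (with legs `p` and `p ≫ f`) has total
components, and for every lax cone `(q, q')` (meaning `q' = f ∘ q ∘ ρ q'`)
there is a unique map `r` with `p ∘ r = q ∘ e` and `(f ∘ p) ∘ r = q' ∘ e`,
where `e` is the composite of the restriction idempotents `ρ q`, `ρ q'`. -/
def IsRestrictionLimitOfArrow {C : Type u} [Category.{v} C]
    [RestrictionCategory C] {X Y P : C} (f : X ⟶ Y) (p : P ⟶ X) : Prop :=
  RestrictionCategory.ρ p = 𝟙 P ∧ RestrictionCategory.ρ (p ≫ f) = 𝟙 P ∧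
  ∀ (Q : C) (q : Q ⟶ X) (q' : Q ⟶ Y),
    q' = (RestrictionCategory.ρ q' ≫ q) ≫ f →
    ∃! r : Q ⟶ P,
      r ≫ p = (RestrictionCategory.ρ q ≫ RestrictionCategory.ρ q') ≫ q ∧
      r ≫ p ≫ f = (RestrictionCategory.ρ q ≫ RestrictionCategory.ρ q') ≫ q'

/-! A restriction limit `p` of `f` yields a splitting: the lax cone `(𝟙 X, f)` factors as
`s ≫ p = ρ f`, and `p ≫ s` and `𝟙 P` both factor the cone `(p, p ≫ f)` through itself, so they
agree. Conversely, if `ρ f` splits through `p`, a lax cone `(q, q')` factors as `e ≫ q ≫ s`,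
because laxness makes `ρ f` act trivially on `ρ q' ≫ q`; the factorization is unique since `p`
has a retraction. -/

namespace RestrictionCategory

variable {C : Type u} [Category.{v} C] [RestrictionCategory C]

theorem ρ_id (A : C) : ρ (𝟙 A) = 𝟙 A := by
  simpa using R1 (𝟙 A)

theorem ρ_comp_ρ_comp {A B D : C} (g : A ⟶ B) (h : B ⟶ D) :
    ρ g ≫ ρ (g ≫ h) = ρ (g ≫ h) := by
  conv_rhs => rw [← R1 g, Category.assoc]
  rw [R3]

theorem ρ_comp_ρ {A B D : C} (g : A ⟶ B) (h : B ⟶ D) : ρ (g ≫ ρ h) = ρ (g ≫ h) := by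
  rw [R4, R3, R2, ρ_comp_ρ_comp]

theorem ρ_eq_id_of_comp_eq_id {P X : C} {p : P ⟶ X} {s : X ⟶ P} (h : p ≫ s = 𝟙 P) :
    ρ p = 𝟙 P := by
  simpa [h, ρ_id] using ρ_comp_ρ_comp p s

theorem ρ_comp_comp_ρ_of_lax {Q X Y : C} {f : X ⟶ Y} {q : Q ⟶ X} {q' : Q ⟶ Y}
    (hq : q' = (ρ q' ≫ q) ≫ f) : ρ q' ≫ q ≫ ρ f = ρ q' ≫ q := by
  have h : ρ q' ≫ ρ (q ≫ f) = ρ q' := by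
    conv_rhs => rw [hq, Category.assoc, R3]
  rw [R4 q f, ← Category.assoc, h]

end RestrictionCategory

section

variable {C : Type u} [Category.{v} C] [RestrictionCategory C] {X Y P : C} {f : X ⟶ Y}
  {p : P ⟶ X}

theorem IsRestrictionLimitOfArrow.exists_splitting (hlim : IsRestrictionLimitOfArrow f p) :
    ∃ s : X ⟶ P, p ≫ s = 𝟙 P ∧ s ≫ p = ρ f := by
  obtain ⟨hp, hpf, hfac⟩ := hlim
  obtain ⟨s, ⟨hs, -⟩, -⟩ := hfac X (𝟙 X) f (by simp [R1])
  rw [ρ_id, Category.id_comp, Category.comp_id] at hs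
  refine ⟨s, ?_, hs⟩
  obtain ⟨r, -, hr⟩ := hfac P p (p ≫ f) (by rw [hpf, Category.id_comp])
  simp only [hp, hpf, Category.id_comp] at hr
  have hid : 𝟙 P = r := hr (𝟙 P) ⟨Category.id_comp p, Category.id_comp _⟩
  have hps : p ≫ s = r := hr (p ≫ s)
    ⟨by rw [Category.assoc, hs, R4, hpf, Category.id_comp],
      by rw [Category.assoc, ← Category.assoc s, hs, R1]⟩
  rw [hps, hid]

theorem isRestrictionLimitOfArrow_of_splitting {s : X ⟶ P} (hps : p ≫ s = 𝟙 P)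
    (hsp : s ≫ p = ρ f) : IsRestrictionLimitOfArrow f p := by
  have hp : ρ p = 𝟙 P := ρ_eq_id_of_comp_eq_id hps
  have hpf : ρ (p ≫ f) = 𝟙 P := by
    rw [← ρ_comp_ρ, ← hsp, ← Category.assoc, hps, Category.id_comp, hp]
  refine ⟨hp, hpf, fun Q q q' hq => ⟨(ρ q ≫ ρ q') ≫ q ≫ s, ⟨?_, ?_⟩, ?_⟩⟩
  · simp only [Category.assoc]
    rw [hsp, ρ_comp_comp_ρ_of_lax hq]
  · have hq' : ρ q' ≫ q' = ρ q' ≫ q ≫ f := by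
      rw [R1 q']
      conv_lhs => rw [hq, Category.assoc]
    simp only [Category.assoc]
    rw [← Category.assoc s p f, hsp, R1, hq']
  · rintro r ⟨hr, -⟩
    rw [← Category.comp_id r, ← hps, ← Category.assoc, hr, Category.assoc]

end

/-- In a restriction category, the restriction limit of a single arrow
`f : X ⟶ Y` is precisely a splitting of the idempotent `ρ f`:
`p : P ⟶ X` exhibits `P` as the restriction limit of `f` iff there is
`s : X ⟶ P` with `p ≫ s = 𝟙 P` and `s ≫ p = ρ f`. -/
theorem stmt_17 {C : Type u} [Category.{v} C] [RestrictionCategory C]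
    {X Y P : C} (f : X ⟶ Y) (p : P ⟶ X) :
    IsRestrictionLimitOfArrow f p ↔
      ∃ s : X ⟶ P, p ≫ s = 𝟙 P ∧ s ≫ p = ρ f :=
  ⟨IsRestrictionLimitOfArrow.exists_splitting,
    fun ⟨_, hps, hsp⟩ => isRestrictionLimitOfArrow_of_splitting hps hsp⟩
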